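/- Let n ≥ 1, let φ be an automorphism of the free group F_n on n generators, and let G_φ = F_n ⋊_φ ℤ be the semidirect product where the generator of ℤ acts by φ. Let φ̄ be the automorphism induced by φ on the abelianization F_n^{ab} ≅ ℤ^n. If the additive endomorphism x ↦ φ̄(x) − x of F_n^{ab} is bijective (equivalently, if the matrix A − E is invertible over ℤ, where A is the matrix of φ̄ and E the identity matrix), then γ_i(G_φ) equals the canonical copy of F_n in G_φ for every i ≥ 2; in particular ⋂_{i≥1} γ_i(G_φ) = F_n and G_φ is not residually nilpotent. -/

import Mathlib

/-!
The commutator subgroup of `G_φ = Fₙ ⋊_φ ℤ` lies in `Fₙ` because `ℤ` is abelian. Conversely,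
`⁅f, t⁆ = f φ(f)⁻¹` for the generator `t` of `ℤ`, and the surjectivity of `φ̄ - id` says that these
elements, together with `[Fₙ, Fₙ]`, generate `Fₙ`; hence `Fₙ ≤ [Fₙ, G_φ]`. So `Fₙ = γ₂(G_φ)` and
`[γ₂(G_φ), G_φ] = γ₂(G_φ)`: the lower central series is constant from the second term on.
-/

open scoped commutatorElement

namespace Subgroup

variable {G : Type*} [Group G]

theorem top_lowerCentralSeries_succ_eq_commutator
    (h : ⁅_root_.commutator G, (⊤ : Subgroup G)⁆ = _root_.commutator G) (k : ℕ) :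
    (⊤ : Subgroup G).lowerCentralSeries (k + 1) = _root_.commutator G := by
  induction k with
  | zero => rfl
  | succ k ih => rw [lowerCentralSeries_succ, ih, h]

theorem iInf_top_lowerCentralSeries_eq_commutator
    (h : ⁅_root_.commutator G, (⊤ : Subgroup G)⁆ = _root_.commutator G) :
    ⨅ i : ℕ, (⊤ : Subgroup G).lowerCentralSeries i = _root_.commutator G := by
  refine le_antisymm (iInf_le_of_le 1 le_rfl) (le_iInf fun i => ?_)
  cases i with
  | zero => exact le_top
  | succ k => exact (top_lowerCentralSeries_succ_eq_commutator h k).ge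

end Subgroup

theorem Abelianization.eq_top_of_commutator_le_of_map_eq_top {F : Type*} [Group F]
    {K : Subgroup F} (hK : commutator F ≤ K) (hmap : K.map Abelianization.of = ⊤) : K = ⊤ := by
  rw [← Subgroup.comap_map_eq_self (H := K) (Abelianization.ker_of F ▸ hK), hmap,
    Subgroup.comap_top]

namespace SemidirectProduct

variable {N G : Type*} [Group N] [Group G] {ψ : G →* MulAut N}

theorem commutatorElement_inl_inr (n : N) (g : G) :
    ⁅(inl n : N ⋊[ψ] G), (inr g : N ⋊[ψ] G)⁆ = inl (n * ψ g n⁻¹) := by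
  ext <;> simp [commutatorElement_def]

theorem commutator_le_range_inl {G : Type*} [CommGroup G] {ψ : G →* MulAut N} :
    commutator (N ⋊[ψ] G) ≤ (inl : N →* N ⋊[ψ] G).range :=
  range_inl_eq_ker_rightHom (φ := ψ) ▸ Abelianization.commutator_subset_ker _

theorem range_inl_le_commutator_range_inl_top (g : G)
    (hsurj : Function.Surjective
      (fun x : Abelianization N => Abelianization.map (ψ g).toMonoidHom x * x⁻¹)) :
    (inl : N →* N ⋊[ψ] G).range ≤ ⁅(inl : N →* N ⋊[ψ] G).range, ⊤⁆ := by
  set K : Subgroup N :=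
    Subgroup.comap (inl : N →* N ⋊[ψ] G) ⁅(inl : N →* N ⋊[ψ] G).range, ⊤⁆
  have hcomm : commutator N ≤ K := by
    rw [← Subgroup.map_le_iff_le_comap, commutator_def, Subgroup.map_commutator,
      ← MonoidHom.range_eq_map]
    exact Subgroup.commutator_mono le_rfl le_top
  have htwist (n : N) : n * ψ g n⁻¹ ∈ K := by
    rw [Subgroup.mem_comap, ← commutatorElement_inl_inr]
    exact Subgroup.commutator_mem_commutator ⟨n, rfl⟩ (Subgroup.mem_top _)
  have hmap : K.map Abelianization.of = ⊤ := by
    refine eq_top_iff.mpr fun y _ => ?_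
    obtain ⟨x, hx⟩ := hsurj y⁻¹
    obtain ⟨n, rfl⟩ : ∃ n, Abelianization.of n = x := QuotientGroup.mk_surjective x
    refine ⟨n * ψ g n⁻¹, htwist n, ?_⟩
    rw [← inv_inv y, ← hx]
    simp [Abelianization.map_of]
  have hK : K = ⊤ := Abelianization.eq_top_of_commutator_le_of_map_eq_top hcomm hmap
  rintro _ ⟨n, rfl⟩
  exact hK.ge (Subgroup.mem_top n)

theorem commutator_range_inl_top_eq {G : Type*} [CommGroup G] {ψ : G →* MulAut N} (g : G)
    (hsurj : Function.Surjective
      (fun x : Abelianization N => Abelianization.map (ψ g).toMonoidHom x * x⁻¹)) :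
    ⁅(inl : N →* N ⋊[ψ] G).range, ⊤⁆ = (inl : N →* N ⋊[ψ] G).range :=
  le_antisymm ((Subgroup.commutator_mono le_top le_rfl).trans (commutator_le_range_inl (ψ := ψ)))
    (range_inl_le_commutator_range_inl_top g hsurj)

theorem commutator_eq_range_inl {G : Type*} [CommGroup G] {ψ : G →* MulAut N} (g : G)
    (hsurj : Function.Surjective
      (fun x : Abelianization N => Abelianization.map (ψ g).toMonoidHom x * x⁻¹)) :
    commutator (N ⋊[ψ] G) = (inl : N →* N ⋊[ψ] G).range :=
  le_antisymm commutator_le_range_inl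
    ((commutator_range_inl_top_eq g hsurj).ge.trans (Subgroup.commutator_mono le_top le_top))

theorem range_inl_ne_bot [Nontrivial N] : (inl : N →* N ⋊[ψ] G).range ≠ ⊥ := by
  rw [MonoidHom.range_eq_map, Ne, Subgroup.map_eq_bot_iff_of_injective _ inl_injective]
  exact top_ne_bot

end SemidirectProduct

/-- let `n ≥ 1`, let `φ` be an automorphism of the free group `Fₙ` and let
`G_φ = Fₙ ⋊_φ ℤ`. If the endomorphism `x ↦ φ̄(x) - x` of the abelianization `Fₙᵃᵇ ≅ ℤⁿ`
(written multiplicatively: `x ↦ φ̄(x) * x⁻¹`) is bijective, then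
`γ_i(G_φ) = Fₙ` (the canonical copy of `Fₙ` in `G_φ`) for all `i ≥ 2`; in particular
`⋂_{i ≥ 1} γ_i(G_φ) = Fₙ` and `G_φ` is not residually nilpotent. -/
theorem mapping_torus_not_residually_nilpotent_of_unimodular
    (n : ℕ) (hn : 1 ≤ n) (φ : MulAut (FreeGroup (Fin n)))
    (hbij : Function.Bijective
      (fun x : Abelianization (FreeGroup (Fin n)) =>
        Abelianization.map φ.toMonoidHom x * x⁻¹)) :
    (∀ i : ℕ, 2 ≤ i →
      (⊤ : Subgroup (FreeGroup (Fin n) ⋊[zpowersHom _ φ] Multiplicative ℤ)).lowerCentralSeries (i - 1) =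
        (SemidirectProduct.inl :
          FreeGroup (Fin n) →* FreeGroup (Fin n) ⋊[zpowersHom _ φ] Multiplicative ℤ).range) ∧
    (⨅ i : ℕ,
      (⊤ : Subgroup (FreeGroup (Fin n) ⋊[zpowersHom _ φ] Multiplicative ℤ)).lowerCentralSeries i) =
        (SemidirectProduct.inl :
          FreeGroup (Fin n) →* FreeGroup (Fin n) ⋊[zpowersHom _ φ] Multiplicative ℤ).range ∧
    ¬ (⨅ i : ℕ,
        (⊤ : Subgroup (FreeGroup (Fin n) ⋊[zpowersHom _ φ] Multiplicative ℤ)).lowerCentralSeries i) = ⊥ := by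
  have hsurj : Function.Surjective (fun x : Abelianization (FreeGroup (Fin n)) =>
      Abelianization.map (zpowersHom _ φ (Multiplicative.ofAdd 1)).toMonoidHom x * x⁻¹) := by
    simpa using hbij.surjective
  have hγ₂ := SemidirectProduct.commutator_eq_range_inl _ hsurj
  have hstable := SemidirectProduct.commutator_range_inl_top_eq _ hsurj
  rw [← hγ₂] at hstable
  have hinf := Subgroup.iInf_top_lowerCentralSeries_eq_commutator hstable
  rw [hγ₂] at hinf
  have : Nonempty (Fin n) := ⟨⟨0, hn⟩⟩
  refine ⟨fun i hi => ?_, hinf, hinf ▸ SemidirectProduct.range_inl_ne_bot⟩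
  obtain ⟨k, rfl⟩ : ∃ k, i = k + 2 := ⟨i - 2, by omega⟩
  exact (Subgroup.top_lowerCentralSeries_succ_eq_commutator hstable k).trans hγ₂
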